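/- Let k = 2 and m ≥ 2. The algebra C_2m^{(0)} equals the unital K-subalgebra of M_2(Ω) generated by the matrices z_i² for i = 1,…,m, z_i z_j + z_j z_i for 1 ≤ i ≤ j ≤ m, and s_3(z_{i_1}, z_{i_2}, z_{i_3}) for 1 ≤ i_1 < i_2 < i_3 ≤ m, where s_3(x_1,x_2,x_3) = ∑_{σ∈S_3} sign(σ)·x_{σ(1)}x_{σ(2)}x_{σ(3)} is the standard polynomial of degree 3. -/

import Mathlib

open scoped BigOperators
noncomputable section

/-- `Ω = K[y_pq^(i)]`, matrices over the polynomial ring in `k²m` variables. -/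
abbrev Mat (K : Type) [Field K] (k m : ℕ) :=
  Matrix (Fin k) (Fin k) (MvPolynomial (Fin m × Fin k × Fin k) K)

/-- The generic `k × k` matrices `y_i = (y_pq^(i))`. -/
def genY (K : Type) [Field K] (k m : ℕ) (i : Fin m) : Mat K k m :=
  Matrix.of fun p q => MvPolynomial.X (i, p, q)

/-- The scalar matrix `f · I` for `f ∈ Ω`. -/
def scalarOf (K : Type) [Field K] (k m : ℕ)
    (f : MvPolynomial (Fin m × Fin k × Fin k) K) : Mat K k m :=
  algebraMap _ _ f

/-- `R_km`: the generic matrix algebra, generated by `y_1, …, y_m`. -/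
def Rkm (K : Type) [Field K] (k m : ℕ) : Subalgebra K (Mat K k m) :=
  Algebra.adjoin K (Set.range (genY K k m))

/-- `C_km`: the pure trace algebra, generated by the `tr(y_{i_1} ⋯ y_{i_l}) · I`, `l ≥ 1`. -/
def Ckm (K : Type) [Field K] (k m : ℕ) : Subalgebra K (Mat K k m) :=
  Algebra.adjoin K
    {x | ∃ (l : ℕ) (w : Fin (l + 1) → Fin m),
      x = scalarOf K k m (Matrix.trace ((List.ofFn fun j => genY K k m (w j)).prod))}

/-- `T_km`: the mixed trace algebra, generated by `R_km ∪ C_km`. -/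
def Tkm (K : Type) [Field K] (k m : ℕ) : Subalgebra K (Mat K k m) :=
  Rkm K k m ⊔ Ckm K k m

/-- The generic traceless matrices `z_i = y_i - (1/k)·tr(y_i)·I`. -/
def genZ (K : Type) [Field K] (k m : ℕ) (i : Fin m) : Mat K k m :=
  genY K k m i - (k : K)⁻¹ • scalarOf K k m (Matrix.trace (genY K k m i))

/-- `W_km`: the algebra generated by the generic traceless matrices `z_1, …, z_m`. -/
def Wkm (K : Type) [Field K] (k m : ℕ) : Subalgebra K (Mat K k m) :=
  Algebra.adjoin K (Set.range (genZ K k m))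

/-- `C_km⁰`: the algebra generated by the `tr(z_{i_1} ⋯ z_{i_l}) · I`, `l ≥ 1`. -/
def Ckm0 (K : Type) [Field K] (k m : ℕ) : Subalgebra K (Mat K k m) :=
  Algebra.adjoin K
    {x | ∃ (l : ℕ) (w : Fin (l + 1) → Fin m),
      x = scalarOf K k m (Matrix.trace ((List.ofFn fun j => genZ K k m (w j)).prod))}

/-- `T_km⁰`: the algebra generated by `W_km ∪ C_km⁰`. -/
def Tkm0 (K : Type) [Field K] (k m : ℕ) : Subalgebra K (Mat K k m) :=
  Wkm K k m ⊔ Ckm0 K k m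

/-- The subspace of matrices all of whose entries have total degree at most `n`,
i.e. `M_k(Ω_{≤n})`. -/
def degLE (K : Type) [Field K] (k m n : ℕ) : Submodule K (Mat K k m) where
  carrier := {a | ∀ p q, (a p q).totalDegree ≤ n}
  add_mem' := by
    intro a b ha hb p q
    calc ((a + b) p q).totalDegree = (a p q + b p q).totalDegree := by simp [Matrix.add_apply]
    _ ≤ max (a p q).totalDegree (b p q).totalDegree := MvPolynomial.totalDegree_add _ _
    _ ≤ n := max_le (ha p q) (hb p q)
  zero_mem' := by intro p q; simp
  smul_mem' := by
    intro c a ha p q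
    calc ((c • a) p q).totalDegree = (c • a p q).totalDegree := by simp [Matrix.smul_apply]
    _ ≤ (a p q).totalDegree := MvPolynomial.totalDegree_smul_le _ _
    _ ≤ n := ha p q

/-- The standard polynomial of degree 3,
`s₃(a,b,c) = ∑_{σ ∈ S₃} sign(σ) · w_{σ(1)} w_{σ(2)} w_{σ(3)}` with `(w₁,w₂,w₃) = (a,b,c)`. -/
def stdS3 {R : Type} [Ring R] (a b c : R) : R :=
  ∑ σ : Equiv.Perm (Fin 3),
    (Equiv.Perm.sign σ : ℤ) • (![a, b, c] (σ 0) * ![a, b, c] (σ 1) * ![a, b, c] (σ 2))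

/-! For traceless `2 × 2` matrices over a commutative ring, `ab + ba = tr(ab)·1`,
`s₃(a, b, c) = 3 tr(abc)·1`, and, for arbitrary `d`,
`2 tr(abcd) = tr(ab) tr(cd) - tr(ac) tr(bd) + tr(bc) tr(ad) + tr(abc) tr(d)`.
By induction on the length, every `tr(z_{i_1} ⋯ z_{i_l})` is therefore a polynomial in the
`tr(z_i z_j)` and `tr(z_i z_j z_l)`, which are, up to the invertible factors `2` and `3`, the
listed generators; since `s₃` is alternating, the triples `i₁ < i₂ < i₃` suffice. -/

theorem stdS3_eq {R : Type} [Ring R] (a b c : R) :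
    stdS3 a b c = a * b * c - a * c * b - b * a * c + b * c * a + c * a * b - c * b * a := by
  have h2 : ∀ p : Fin 3,
      Equiv.Perm.decomposeFin.symm (p, Equiv.swap 0 1) 2 = Equiv.swap 0 p 1 := by
    decide
  rw [stdS3, Finset.univ_perm_fin_succ, Finset.sum_map, ← Finset.univ_product_univ,
    Finset.sum_product, Finset.univ_perm_fin_succ]
  simp [Finset.sum_map, ← Finset.univ_product_univ, Fin.sum_univ_succ,
    Equiv.Perm.decomposeFin.symm_sign, Equiv.swap_apply_def, h2]
  abel

theorem alternatization_mkPiAlgebraFin_three_apply {R : Type} [Ring R] (v : Fin 3 → R) :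
    MultilinearMap.alternatization (MultilinearMap.mkPiAlgebraFin ℤ 3 R) v =
      stdS3 (v 0) (v 1) (v 2) := by
  have hv : ![v 0, v 1, v 2] = v := by ext i; fin_cases i <;> rfl
  simp [stdS3, hv, MultilinearMap.alternatization_apply, List.ofFn_succ, Units.smul_def,
    mul_assoc]

theorem AlternatingMap.map_comp_mem_of_forall_strictMono {R M N α S : Type*} [Semiring R]
    [AddCommMonoid M] [Module R M] [AddCommGroup N] [Module R N] [SetLike S N]
    [AddSubgroupClass S N] [LinearOrder α] {n : ℕ} (g : M [⋀^Fin n]→ₗ[R] N) (s : S)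
    (f : α → M) (h : ∀ u : Fin n → α, StrictMono u → g (f ∘ u) ∈ s) (u : Fin n → α) :
    g (f ∘ u) ∈ s := by
  by_cases hu : Function.Injective u
  · set σ := Tuple.sort u
    have hσ : StrictMono (u ∘ σ) :=
      (Tuple.monotone_sort u).strictMono_of_injective (hu.comp σ.injective)
    have hfu : f ∘ u = (f ∘ (u ∘ σ)) ∘ ⇑σ⁻¹ := by ext; simp
    rw [hfu, g.map_perm, Units.smul_def]
    exact zsmul_mem (h _ hσ) _
  · rw [g.map_eq_zero_of_not_injective _ fun hfu => hu hfu.of_comp]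
    exact zero_mem s

theorem stdS3_mem_of_forall_lt {R : Type} {α S : Type*} [Ring R] [SetLike S R]
    [AddSubgroupClass S R] [LinearOrder α] (s : S) (f : α → R)
    (h : ∀ i j l, i < j → j < l → stdS3 (f i) (f j) (f l) ∈ s) (i j l : α) :
    stdS3 (f i) (f j) (f l) ∈ s := by
  have hmem := (MultilinearMap.alternatization (MultilinearMap.mkPiAlgebraFin ℤ 3 R)
    ).map_comp_mem_of_forall_strictMono s f (fun u hu => by
      rw [alternatization_mkPiAlgebraFin_three_apply]
      exact h _ _ _ (hu (by decide)) (hu (by decide))) ![i, j, l]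
  rwa [alternatization_mkPiAlgebraFin_three_apply] at hmem

namespace Matrix

section TracelessFinTwo

variable {R : Type*} [CommRing R] {a b c : Matrix (Fin 2) (Fin 2) R}

theorem fin_two_apply_one_one_of_trace_eq_zero (ha : trace a = 0) : a 1 1 = -a 0 0 := by
  rw [trace_fin_two] at ha
  linear_combination ha

theorem mul_add_mul_eq_algebraMap_trace_of_trace_eq_zero (ha : trace a = 0)
    (hb : trace b = 0) : a * b + b * a = algebraMap R _ (trace (a * b)) := by
  ext i j
  fin_cases i <;> fin_cases j <;>
    simp [mul_apply, trace_fin_two, algebraMap_eq_diagonal,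
      fin_two_apply_one_one_of_trace_eq_zero, ha, hb] <;> ring

theorem two_mul_trace_mul_mul_mul_of_trace_eq_zero (ha : trace a = 0) (hb : trace b = 0)
    (hc : trace c = 0) (d : Matrix (Fin 2) (Fin 2) R) :
    2 * trace (a * b * c * d) =
      trace (a * b) * trace (c * d) - trace (a * c) * trace (b * d)
        + trace (b * c) * trace (a * d) + trace (a * b * c) * trace d := by
  simp [trace_fin_two, mul_apply, Fin.sum_univ_two, fin_two_apply_one_one_of_trace_eq_zero,
    ha, hb, hc]
  ring

variable {K ι : Type*} [CommRing K] [Invertible (2 : K)] [Algebra K R]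
  (S : Subalgebra K (Matrix (Fin 2) (Fin 2) R)) {z : ι → Matrix (Fin 2) (Fin 2) R}

theorem algebraMap_trace_list_prod_mem (hz : ∀ i, trace (z i) = 0)
    (h2 : ∀ i j, algebraMap R _ (trace (z i * z j)) ∈ S)
    (h3 : ∀ i j l, algebraMap R _ (trace (z i * z j * z l)) ∈ S) :
    ∀ u : List ι, algebraMap R (Matrix (Fin 2) (Fin 2) R) (trace (u.map z).prod) ∈ S
  | [] => by
    rw [List.map_nil, List.prod_nil, trace_one, Fintype.card_fin, map_natCast]
    exact natCast_mem S 2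
  | [i] => by simp [hz]
  | [i, j] => by simpa using h2 i j
  | [i, j, l] => by simpa [mul_assoc] using h3 i j l
  | i :: j :: l :: d :: rest => by
    set P := ((d :: rest).map z).prod
    have hP := algebraMap_trace_list_prod_mem hz h2 h3 (d :: rest)
    have hxP (x : ι) : algebraMap R _ (trace (z x * P)) ∈ S :=
      algebraMap_trace_list_prod_mem hz h2 h3 (x :: d :: rest)
    have hprod : ((i :: j :: l :: d :: rest).map z).prod = z i * z j * z l * P := by
      simp [P, mul_assoc]
    have htwo :
        2 * algebraMap R (Matrix (Fin 2) (Fin 2) R) (trace (z i * z j * z l * P)) ∈ S := by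
      rw [← map_ofNat (algebraMap R (Matrix (Fin 2) (Fin 2) R)) 2, ← map_mul,
        two_mul_trace_mul_mul_mul_of_trace_eq_zero (hz i) (hz j) (hz l)]
      simp only [map_add, map_sub, map_mul]
      exact add_mem (add_mem (sub_mem (mul_mem (h2 i j) (hxP l)) (mul_mem (h2 i l) (hxP j)))
        (mul_mem (h2 j l) (hxP i))) (mul_mem (h3 i j l) hP)
    rw [hprod, ← invOf_smul_smul (2 : K) (algebraMap R _ _), two_smul, ← two_mul]
    exact S.smul_mem htwo _
termination_by u => u.length

end TracelessFinTwo

theorem stdS3_eq_algebraMap_trace_of_trace_eq_zero {R : Type} [CommRing R]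
    {a b c : Matrix (Fin 2) (Fin 2) R} (ha : trace a = 0) (hb : trace b = 0)
    (hc : trace c = 0) : stdS3 a b c = algebraMap R _ (3 * trace (a * b * c)) := by
  rw [stdS3_eq]
  ext i j
  fin_cases i <;> fin_cases j <;>
    simp [mul_apply, trace_fin_two, algebraMap_eq_diagonal,
      fin_two_apply_one_one_of_trace_eq_zero, ha, hb, hc] <;> ring

end Matrix

theorem trace_genZ (K : Type) [Field K] [CharZero K] (k m : ℕ) (i : Fin m) :
    Matrix.trace (genZ K k m i) = 0 := by
  rcases Nat.eq_zero_or_pos k with rfl | hk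
  · exact Matrix.trace_fin_zero _
  · rw [genZ, scalarOf, Algebra.algebraMap_eq_smul_one, Matrix.trace_sub, Matrix.trace_smul,
      Matrix.trace_smul, Matrix.trace_one, Fintype.card_fin, smul_eq_mul, mul_comm,
      ← nsmul_eq_mul, ← Nat.cast_smul_eq_nsmul K, smul_smul,
      inv_mul_cancel₀ (Nat.cast_ne_zero.mpr hk.ne'), one_smul, sub_self]

theorem algebraMap_trace_prod_mem_Ckm0 (K : Type) [Field K] (k m : ℕ) (i : Fin m)
    (u : List (Fin m)) :
    algebraMap _ (Mat K k m) (Matrix.trace ((i :: u).map (genZ K k m)).prod) ∈ Ckm0 K k m :=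
  Algebra.subset_adjoin ⟨u.length, (i :: u).get, by simp [scalarOf, List.ofFn_getElem_eq_map]⟩

section GenericTraceless

variable (K : Type) [Field K] [CharZero K] (m : ℕ)

theorem genZ_mul_add_mul (i j : Fin m) :
    genZ K 2 m i * genZ K 2 m j + genZ K 2 m j * genZ K 2 m i =
      algebraMap _ (Mat K 2 m) (Matrix.trace (genZ K 2 m i * genZ K 2 m j)) :=
  Matrix.mul_add_mul_eq_algebraMap_trace_of_trace_eq_zero (trace_genZ K 2 m i)
    (trace_genZ K 2 m j)

theorem stdS3_genZ (i j l : Fin m) :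
    stdS3 (genZ K 2 m i) (genZ K 2 m j) (genZ K 2 m l) =
      (3 : K) • algebraMap _ (Mat K 2 m)
        (Matrix.trace (genZ K 2 m i * genZ K 2 m j * genZ K 2 m l)) := by
  rw [Matrix.stdS3_eq_algebraMap_trace_of_trace_eq_zero (trace_genZ K 2 m i)
    (trace_genZ K 2 m j) (trace_genZ K 2 m l), Algebra.smul_def, map_ofNat, map_mul,
    map_ofNat]

end GenericTraceless

theorem stmt12_general (K : Type) [Field K] [CharZero K] (m : ℕ) :
    Ckm0 K 2 m = Algebra.adjoin K
      ({x | ∃ i, x = genZ K 2 m i * genZ K 2 m i} ∪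
       {x | ∃ i j, i ≤ j ∧
          x = genZ K 2 m i * genZ K 2 m j + genZ K 2 m j * genZ K 2 m i} ∪
       {x | ∃ i₁ i₂ i₃, i₁ < i₂ ∧ i₂ < i₃ ∧
          x = stdS3 (genZ K 2 m i₁) (genZ K 2 m i₂) (genZ K 2 m i₃)}) := by
  apply le_antisymm
  · refine Algebra.adjoin_le ?_
    rintro _ ⟨l, w, rfl⟩
    rw [show (List.ofFn fun j => genZ K 2 m (w j)) = (List.ofFn w).map (genZ K 2 m) by
      rw [List.map_ofFn]; rfl]
    refine Matrix.algebraMap_trace_list_prod_mem _ (trace_genZ K 2 m) (fun i j => ?_)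
      (fun i j l => ?_) _
    · rcases le_total i j with hij | hji
      · rw [← genZ_mul_add_mul]
        exact Algebra.subset_adjoin (Or.inl (Or.inr ⟨i, j, hij, rfl⟩))
      · rw [Matrix.trace_mul_comm, ← genZ_mul_add_mul]
        exact Algebra.subset_adjoin (Or.inl (Or.inr ⟨j, i, hji, rfl⟩))
    · rw [← invOf_smul_smul (3 : K) (algebraMap _ _ _), ← stdS3_genZ]
      refine Subalgebra.smul_mem _ (stdS3_mem_of_forall_lt _ (genZ K 2 m) ?_ i j l) _
      exact fun i j l hij hjl => Algebra.subset_adjoin (Or.inr ⟨i, j, l, hij, hjl, rfl⟩)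
  · refine Algebra.adjoin_le ?_
    rintro _ ((⟨i, rfl⟩ | ⟨i, j, -, rfl⟩) | ⟨i, j, l, -, -, rfl⟩)
    · rw [← invOf_smul_smul (2 : K) (_ * _), two_smul, genZ_mul_add_mul]
      exact Subalgebra.smul_mem _ (by simpa using algebraMap_trace_prod_mem_Ckm0 K 2 m i [i]) _
    · rw [genZ_mul_add_mul]
      simpa using algebraMap_trace_prod_mem_Ckm0 K 2 m i [j]
    · rw [stdS3_genZ]
      refine Subalgebra.smul_mem _ ?_ _
      simpa [mul_assoc] using algebraMap_trace_prod_mem_Ckm0 K 2 m i [j, l]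

/-- **Drensky.** For `k = 2`, `m ≥ 2`, the algebra `C_2m⁰` equals the unital
`K`-subalgebra of `M_2(Ω)` generated by the `z_i²`, the `z_i z_j + z_j z_i` (`i ≤ j`) and
the `s₃(z_{i_1}, z_{i_2}, z_{i_3})` (`i_1 < i_2 < i_3`). -/
theorem stmt12 (K : Type) [Field K] [CharZero K] (m : ℕ) (hm : 2 ≤ m) :
    Ckm0 K 2 m = Algebra.adjoin K
      ({x | ∃ i, x = genZ K 2 m i * genZ K 2 m i} ∪
       {x | ∃ i j, i ≤ j ∧
          x = genZ K 2 m i * genZ K 2 m j + genZ K 2 m j * genZ K 2 m i} ∪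
       {x | ∃ i₁ i₂ i₃, i₁ < i₂ ∧ i₂ < i₃ ∧
          x = stdS3 (genZ K 2 m i₁) (genZ K 2 m i₂) (genZ K 2 m i₃)}) :=
  stmt12_general K m
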